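/- arXiv:2107.10885 — 3 statements merged into one kernel-verified Lean document; each statement's English description precedes it below -/
import Mathlib

section
/- Suppose ∇g_n(θ̂_n) = 0, every eigenvalue of −g_n''(θ) lies in [η₁ n, η₂ n] for all θ with ‖θ−θ̂_n‖₂ ≤ δ, and p(n) ≤ A n^α with α < 1. Then there exists N ∈ ℕ, depending only on η₁, η₂, δ, A, α, such that for all n ≥ N: det(−g_n''(θ̂_n))^{1/2} (2π)^{−p/2} ∫_{γ_n < ‖θ−θ̂_n‖₂ ≤ δ} exp(g_n(θ) − g_n(θ̂_n)) dθ ≤ n^{−η₁ p/4}. -/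
open MeasureTheory Real Filter Matrix

noncomputable section

/-- Euclidean space `ℝ^p` with the `ℓ²` norm. -/
abbrev E (p : ℕ) := EuclideanSpace ℝ (Fin p)

/-- View a plain function `Fin p → ℝ` as a point of `ℝ^p` (they are definitionally equal). -/
def toE {p : ℕ} (v : Fin p → ℝ) : E p := WithLp.toLp 2 v

/-- The `j`-th standard basis vector of `ℝ^p`. -/
def bvec {p : ℕ} (j : Fin p) : E p := EuclideanSpace.single j 1

/-- The partial derivative `∂^k f / ∂θ_{v 0} ⋯ ∂θ_{v (k-1)}` of `f : ℝ^p → ℝ` at `x`. -/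
def pd {p : ℕ} (k : ℕ) (f : E p → ℝ) (x : E p) (v : Fin k → Fin p) : ℝ :=
  iteratedFDeriv ℝ k f x (fun i => bvec (v i))

/-- The Hessian matrix of `f : ℝ^p → ℝ` at `x`. -/
def hess {p : ℕ} (f : E p → ℝ) (x : E p) : Matrix (Fin p) (Fin p) ℝ :=
  Matrix.of fun j k => pd 2 f x ![j, k]

/-- `M` is symmetric with all eigenvalues in the interval `[a, b]`. -/
def eigsIn {p : ℕ} (M : Matrix (Fin p) (Fin p) ℝ) (a b : ℝ) : Prop :=
  ∃ hM : M.IsHermitian, ∀ i, a ≤ hM.eigenvalues i ∧ hM.eigenvalues i ≤ b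

/-- Maximum absolute row sum norm `‖M‖_∞` of a matrix. -/
def maxRowSum {p : ℕ} (M : Matrix (Fin p) (Fin p) ℝ) : ℝ :=
  ⨆ j, ∑ k, |M j k|

/-- `‖M^{-1/2}‖_∞ ≤ bd`: any positive semidefinite square root `R` of `M` has
`maxRowSum R⁻¹ ≤ bd`. -/
def invSqrtRowSumBound {p : ℕ} (M : Matrix (Fin p) (Fin p) ℝ) (bd : ℝ) : Prop :=
  ∀ R : Matrix (Fin p) (Fin p) ℝ, R.PosSemidef → R * R = M → maxRowSum R⁻¹ ≤ bd

/-- `γ_n = (p log n / n)^{1/2}`. -/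
def gam (p n : ℕ) : ℝ := Real.sqrt (p * Real.log n / n)

/-! On the `δ`-ball the eigenvalue bound turns the second-order Taylor expansion at the critical
point `θ̂_n` into `g_n θ - g_n θ̂_n ≤ -(η₁ n / 2) ‖θ - θ̂_n‖²`. On the annulus
`‖θ - θ̂_n‖² > p log n / n`, so three quarters of this exponent contribute the factor
`n^(-3 η₁ p / 8)` and the remaining quarter is a Gaussian of total mass `(8π / (η₁ n))^(p/2)`.
Together with `det(-g_n''(θ̂_n))^(1/2) ≤ (η₂ n)^(p/2)` the left side is at most
`n^(-3 η₁ p / 8) (4 η₂ / η₁)^(p/2)`, and `(4 η₂ / η₁)^(p/2) ≤ n^(η₁ p / 8)` as soon as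
`n ≥ (4 η₂ / η₁)^(4 / η₁)`. -/

open scoped MatrixOrder in
lemma Matrix.IsHermitian.mul_dotProduct_self_le {n : Type*} [Fintype n] [DecidableEq n]
    {M : Matrix n n ℝ} (hM : M.IsHermitian) {a : ℝ} (h : ∀ i, a ≤ hM.eigenvalues i)
    (v : n → ℝ) : a * (v ⬝ᵥ v) ≤ v ⬝ᵥ M *ᵥ v := by
  have hle : algebraMap ℝ _ a ≤ M := by
    rw [algebraMap_le_iff_le_spectrum (a := M) hM.isSelfAdjoint,
      hM.spectrum_real_eq_range_eigenvalues]
    rintro _ ⟨i, rfl⟩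
    exact h i
  have := (Matrix.le_iff.1 hle).dotProduct_mulVec_nonneg v
  simpa [Matrix.sub_mulVec, Algebra.algebraMap_eq_smul_one, Matrix.smul_mulVec] using this

lemma fderiv_fderiv_apply_eq_dotProduct_hess {p : ℕ} (f : E p → ℝ) (x v w : E p) :
    fderiv ℝ (fderiv ℝ f) x v w = v.ofLp ⬝ᵥ hess f x *ᵥ w.ofLp := by
  set b := (EuclideanSpace.basisFun (Fin p) ℝ).toBasis
  have hmat : hess f x = LinearMap.toMatrix₂ b b (fderiv ℝ (fderiv ℝ f) x).toLinearMap₁₂ := by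
    ext j k
    simp [b, hess, pd, iteratedFDeriv_two_apply, bvec]
  rw [hmat]
  exact apply_eq_dotProduct_toMatrix₂_mulVec b b (fderiv ℝ (fderiv ℝ f) x).toLinearMap₁₂ v w

lemma antitoneOn_Icc_of_hasDerivAt_nonpos {f f' : ℝ → ℝ} {a b : ℝ}
    (hf : ∀ t, HasDerivAt f (f' t) t) (hf' : ∀ t ∈ Set.Ioo a b, f' t ≤ 0) :
    AntitoneOn f (Set.Icc a b) :=
  antitoneOn_of_hasDerivWithinAt_nonpos (convex_Icc a b)
    (fun t _ ↦ (hf t).continuousAt.continuousWithinAt) (fun t _ ↦ (hf t).hasDerivWithinAt)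
    (by rwa [interior_Icc])

/-- `φ t + K t² / 2` is concave with zero slope at `0`, hence antitone on `[0, 1]`. -/
lemma sub_le_neg_half_of_hasDerivAt_of_deriv_le {φ φ' φ'' : ℝ → ℝ} {K : ℝ}
    (hφ : ∀ t, HasDerivAt φ (φ' t) t) (hφ' : ∀ t, HasDerivAt φ' (φ'' t) t) (h0 : φ' 0 = 0)
    (hK : ∀ t ∈ Set.Ioo (0 : ℝ) 1, φ'' t ≤ -K) :
    φ 1 - φ 0 ≤ -(K / 2) := by
  have hslope : AntitoneOn (fun t ↦ φ' t + K * t) (Set.Icc 0 1) :=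
    antitoneOn_Icc_of_hasDerivAt_nonpos (fun t ↦ (hφ' t).add ((hasDerivAt_id t).const_mul K))
      fun t ht ↦ by linarith [hK t ht]
  have hval : AntitoneOn (fun t ↦ φ t + K * (t ^ 2 / 2)) (Set.Icc 0 1) := by
    refine antitoneOn_Icc_of_hasDerivAt_nonpos (f' := fun t ↦ φ' t + K * t)
      (fun t ↦ (hφ t).add ?_) fun t ht ↦ ?_
    · simpa using ((hasDerivAt_pow 2 t).div_const 2).const_mul K
    · simpa [h0] using hslope (Set.left_mem_Icc.2 zero_le_one) (Set.Ioo_subset_Icc_self ht) ht.1.le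
  have := hval (Set.left_mem_Icc.2 zero_le_one) (Set.right_mem_Icc.2 zero_le_one) zero_le_one
  simp only at this
  linarith

lemma sub_le_neg_mul_norm_sq_of_fderiv_eq_zero {F : Type*} [NormedAddCommGroup F]
    [NormedSpace ℝ F] {g : F → ℝ} {s : Set F} {x₀ x : F} {c : ℝ} (hg : ContDiff ℝ 2 g)
    (hs : Convex ℝ s) (hx₀ : x₀ ∈ s) (hx : x ∈ s) (hcrit : fderiv ℝ g x₀ = 0)
    (hH : ∀ y ∈ s, ∀ w, fderiv ℝ (fderiv ℝ g) y w w ≤ -(c * ‖w‖ ^ 2)) :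
    g x - g x₀ ≤ -(c / 2) * ‖x - x₀‖ ^ 2 := by
  set v := x - x₀
  have hline : ∀ t : ℝ, HasDerivAt (fun s : ℝ ↦ x₀ + s • v) v t := fun t ↦ by
    simpa using ((hasDerivAt_id t).smul_const v).const_add x₀
  have hg' : ∀ t : ℝ, HasDerivAt (fun s ↦ g (x₀ + s • v)) (fderiv ℝ g (x₀ + t • v) v) t :=
    fun t ↦ (hg.differentiable (by norm_num) _).hasFDerivAt.comp_hasDerivAt t (hline t)
  have hD : Differentiable ℝ (fderiv ℝ g) :=
    (hg.fderiv_right (m := 1) (by norm_num)).differentiable (by norm_num)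
  have hg'' : ∀ t : ℝ, HasDerivAt (fun s ↦ fderiv ℝ g (x₀ + s • v) v)
      (fderiv ℝ (fderiv ℝ g) (x₀ + t • v) v v) t := fun t ↦ by
    simpa using ((hD _).hasFDerivAt.comp_hasDerivAt t (hline t)).clm_apply (hasDerivAt_const t v)
  have := sub_le_neg_half_of_hasDerivAt_of_deriv_le hg' hg'' (by simp [hcrit])
    fun t ht ↦ hH _ (hs.add_smul_sub_mem hx₀ hx (Set.Ioo_subset_Icc_self ht)) v
  simp only [one_smul, zero_smul, add_zero, add_sub_cancel, v] at this
  linarith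

lemma eigsIn.det_le {n : ℕ} {M : Matrix (Fin n) (Fin n) ℝ} {a b : ℝ} (hM : eigsIn M a b)
    (ha : 0 ≤ a) : M.det ≤ b ^ n := by
  obtain ⟨hH, hab⟩ := hM
  rw [hH.det_eq_prod_eigenvalues]
  simpa using Finset.prod_le_prod (s := Finset.univ) (g := fun _ ↦ b)
    (fun i _ ↦ ha.trans (hab i).1) fun i _ ↦ (hab i).2

lemma eigsIn.sqrt_det_le {n : ℕ} {M : Matrix (Fin n) (Fin n) ℝ} {a b : ℝ} (hM : eigsIn M a b)
    (ha : 0 ≤ a) (hb : 0 ≤ b) : √M.det ≤ b ^ (n / 2 : ℝ) :=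
  calc √M.det ≤ √(b ^ n) := sqrt_le_sqrt (hM.det_le ha)
    _ = b ^ (n / 2 : ℝ) := by
      rw [sqrt_eq_rpow, ← rpow_natCast, ← rpow_mul hb]
      ring_nf

lemma eigsIn.fderiv_fderiv_apply_le {p : ℕ} {f : E p → ℝ} {x : E p} {a b : ℝ}
    (h : eigsIn (-(hess f x)) a b) (w : E p) :
    fderiv ℝ (fderiv ℝ f) x w w ≤ -(a * ‖w‖ ^ 2) := by
  obtain ⟨hH, hab⟩ := h
  have := hH.mul_dotProduct_self_le (fun i ↦ (hab i).1) w.ofLp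
  rw [Matrix.neg_mulVec, dotProduct_neg] at this
  rw [fderiv_fderiv_apply_eq_dotProduct_hess, ← real_inner_self_eq_norm_sq,
    EuclideanSpace.inner_eq_star_dotProduct, star_trivial]
  linarith

lemma sub_le_of_eigsIn {p : ℕ} {f : E p → ℝ} {θ₀ θ : E p} {δ a b : ℝ} (hf : ContDiff ℝ 2 f)
    (hcrit : fderiv ℝ f θ₀ = 0) (heig : ∀ y : E p, ‖y - θ₀‖ ≤ δ → eigsIn (-(hess f y)) a b)
    (hθ : ‖θ - θ₀‖ ≤ δ) : f θ - f θ₀ ≤ -(a / 2) * ‖θ - θ₀‖ ^ 2 :=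
  sub_le_neg_mul_norm_sq_of_fderiv_eq_zero hf (convex_closedBall θ₀ δ)
    (Metric.mem_closedBall_self ((norm_nonneg _).trans hθ)) (mem_closedBall_iff_norm.2 hθ) hcrit
    fun y hy ↦ (heig y (mem_closedBall_iff_norm.1 hy)).fderiv_fderiv_apply_le

section Gaussian

variable {V : Type*} [NormedAddCommGroup V] [InnerProductSpace ℝ V] [FiniteDimensional ℝ V]
  [MeasurableSpace V] [BorelSpace V]

lemma integral_exp_neg_mul_norm_sub_sq {b : ℝ} (hb : 0 < b) (x₀ : V) :
    ∫ x, rexp (-b * ‖x - x₀‖ ^ 2) = (π / b) ^ (Module.finrank ℝ V / 2 : ℝ) := by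
  rw [integral_sub_right_eq_self (fun x ↦ rexp (-b * ‖x‖ ^ 2)),
    GaussianFourier.integral_rexp_neg_mul_sq_norm hb]

lemma integrable_exp_neg_mul_norm_sub_sq {b : ℝ} (hb : 0 < b) (x₀ : V) :
    Integrable fun x ↦ rexp (-b * ‖x - x₀‖ ^ 2) :=
  .of_integral_ne_zero <| by
    rw [integral_exp_neg_mul_norm_sub_sq hb]
    exact (rpow_pos_of_pos (div_pos pi_pos hb) _).ne'

lemma setIntegral_le_mul_gaussian {f : V → ℝ} {S : Set V} {x₀ : V} {C b : ℝ}
    (hS : MeasurableSet S) (hC : 0 ≤ C) (hb : 0 < b)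
    (hf : ∀ x ∈ S, f x ≤ C * rexp (-b * ‖x - x₀‖ ^ 2)) :
    ∫ x in S, f x ≤ C * (π / b) ^ (Module.finrank ℝ V / 2 : ℝ) := by
  have hG := (integrable_exp_neg_mul_norm_sub_sq hb x₀).const_mul C
  by_cases hfS : IntegrableOn f S
  · calc ∫ x in S, f x ≤ ∫ x in S, C * rexp (-b * ‖x - x₀‖ ^ 2) :=
          setIntegral_mono_on hfS hG.integrableOn hS hf
      _ ≤ ∫ x, C * rexp (-b * ‖x - x₀‖ ^ 2) :=
          setIntegral_le_integral hG (.of_forall fun x ↦ by positivity)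
      _ = C * (π / b) ^ (Module.finrank ℝ V / 2 : ℝ) := by
          rw [integral_const_mul, integral_exp_neg_mul_norm_sub_sq hb]
  · rw [integral_undef hfS]
    positivity

end Gaussian

lemma exp_neg_mul_sq_le_rpow {c n m r : ℝ} (hc : 0 ≤ c) (hn : 0 < n)
    (hr : m * Real.log n / n ≤ r ^ 2) :
    rexp (-(c * n) * r ^ 2) ≤ n ^ (-(c * m)) := by
  rw [rpow_def_of_pos hn, exp_le_exp]
  have : m * Real.log n ≤ n * r ^ 2 := by rwa [div_le_iff₀' hn] at hr
  nlinarith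

lemma exp_le_rpow_mul_exp_of_le {x c n m r : ℝ} (hc : 0 ≤ c) (hn : 0 < n)
    (hx : x ≤ -(c * n / 2) * r ^ 2) (hr : m * Real.log n / n ≤ r ^ 2) :
    rexp x ≤ n ^ (-(3 * c / 8 * m)) * rexp (-(c * n / 8) * r ^ 2) :=
  calc rexp x ≤ rexp (-(3 * c / 8 * n) * r ^ 2 + -(c * n / 8) * r ^ 2) :=
        exp_le_exp.2 (hx.trans_eq (by ring))
    _ = rexp (-(3 * c / 8 * n) * r ^ 2) * rexp (-(c * n / 8) * r ^ 2) := exp_add _ _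
    _ ≤ n ^ (-(3 * c / 8 * m)) * rexp (-(c * n / 8) * r ^ 2) :=
        mul_le_mul_of_nonneg_right (exp_neg_mul_sq_le_rpow (by positivity) hn hr) (exp_nonneg _)

lemma setIntegral_annulus_exp_le {p n : ℕ} {G : E p → ℝ} {θ₀ : E p} {c δ : ℝ} (hc : 0 < c)
    (hn : 0 < n) (hG : ∀ θ : E p, ‖θ - θ₀‖ ≤ δ → G θ - G θ₀ ≤ -(c * n / 2) * ‖θ - θ₀‖ ^ 2) :
    ∫ θ in {θ : E p | gam p n < ‖θ - θ₀‖ ∧ ‖θ - θ₀‖ ≤ δ}, rexp (G θ - G θ₀) ≤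
      n ^ (-(3 * c / 8 * p)) * (π / (c * n / 8)) ^ (p / 2 : ℝ) := by
  have hd : Measurable fun θ : E p ↦ ‖θ - θ₀‖ := by fun_prop
  have := setIntegral_le_mul_gaussian
    ((measurableSet_lt measurable_const hd).inter (measurableSet_le hd measurable_const))
    (by positivity) (by positivity)
    fun θ hθ ↦ exp_le_rpow_mul_exp_of_le (m := p) hc.le (Nat.cast_pos.2 hn) (hG θ hθ.2)
      ((sqrt_lt' (hθ.1.trans_le' (sqrt_nonneg _))).1 hθ.1).le
  rwa [finrank_euclideanSpace_fin] at this

lemma rpow_le_rpow_mul_of_rpow_inv_le {x y s t : ℝ} (hx : 0 ≤ x) (hs : 0 < s) (ht : 0 ≤ t)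
    (hxy : x ^ s⁻¹ ≤ y) : x ^ t ≤ y ^ (s * t) := by
  calc x ^ t = (x ^ s⁻¹) ^ (s * t) := by rw [← rpow_mul hx, inv_mul_cancel_left₀ hs.ne']
    _ ≤ y ^ (s * t) := rpow_le_rpow (rpow_nonneg hx _) hxy (by positivity)

lemma rpow_half_normalization_eq {η₁ η₂ n m : ℝ} (hη₁ : 0 < η₁) (hη₂ : 0 < η₂) (hn : 0 < n) :
    (η₂ * n) ^ (m / 2) * (2 * π) ^ (-m / 2) * (π / (η₁ * n / 8)) ^ (m / 2) =
      (4 * η₂ / η₁) ^ (m / 2) := by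
  rw [neg_div, rpow_neg (by positivity), ← inv_rpow (by positivity),
    ← mul_rpow (by positivity) (by positivity), ← mul_rpow (by positivity) (by positivity)]
  congr 1
  field_simp
  ring

theorem annulus_contribution_bound_general
    (δ η₁ η₂ A α : ℝ) (hδ : 0 < δ) (hη₁ : 0 < η₁) (hη₁₂ : η₁ ≤ η₂) :
    ∃ N : ℕ, ∀ (p : ℕ → ℕ) (g : (n : ℕ) → E (p n) → ℝ) (θhat : (n : ℕ) → E (p n)),
      (∀ n, (p n : ℝ) ≤ A * (n : ℝ) ^ α) →
      (∀ n, ContDiff ℝ 2 (g n)) →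
      (∀ n, fderiv ℝ (g n) (θhat n) = 0) →
      (∀ n, ∀ θ : E (p n), ‖θ - θhat n‖ ≤ δ →
        eigsIn (-(hess (g n) θ)) (η₁ * n) (η₂ * n)) →
      ∀ n ≥ N,
        Real.sqrt ((-(hess (g n) (θhat n))).det) * (2 * π) ^ (-(p n : ℝ) / 2) *
          (∫ θ in {θ : E (p n) | gam (p n) n < ‖θ - θhat n‖ ∧ ‖θ - θhat n‖ ≤ δ},
            Real.exp (g n θ - g n (θhat n)))
        ≤ (n : ℝ) ^ (-(η₁ * p n) / 4) := by
  set κ := 4 * η₂ / η₁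
  have hη₂ : 0 < η₂ := hη₁.trans_le hη₁₂
  have hκ : 1 ≤ κ := by rw [le_div_iff₀ hη₁]; linarith
  refine ⟨⌈κ ^ (4 / η₁)⌉₊, fun p g θhat _ hg hcrit heig n hn ↦ ?_⟩
  have hκn : κ ^ (4 / η₁) ≤ n := Nat.ceil_le.1 hn
  have hn0 : (0 : ℝ) < n := one_pos.trans_le ((one_le_rpow hκ (by positivity)).trans hκn)
  have hI := setIntegral_annulus_exp_le hη₁ (Nat.cast_pos.1 hn0)
    fun θ ↦ sub_le_of_eigsIn (hg n) (hcrit n) (heig n)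
  have hdet := (heig n (θhat n) (by simpa using hδ.le)).sqrt_det_le (by positivity) (by positivity)
  calc √(-(hess (g n) (θhat n))).det * (2 * π) ^ (-(p n : ℝ) / 2) *
        ∫ θ in {θ : E (p n) | gam (p n) n < ‖θ - θhat n‖ ∧ ‖θ - θhat n‖ ≤ δ},
          rexp (g n θ - g n (θhat n))
      ≤ (η₂ * n) ^ (p n / 2 : ℝ) * (2 * π) ^ (-(p n : ℝ) / 2) *
        (n ^ (-(3 * η₁ / 8 * p n)) * (π / (η₁ * n / 8)) ^ (p n / 2 : ℝ)) := by
        gcongr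
    _ = n ^ (-(3 * η₁ / 8 * p n)) * κ ^ (p n / 2 : ℝ) := by
        rw [← rpow_half_normalization_eq hη₁ hη₂ hn0]
        ring
    _ ≤ n ^ (-(3 * η₁ / 8 * p n)) * n ^ (η₁ / 4 * (p n / 2)) := by
        gcongr
        exact rpow_le_rpow_mul_of_rpow_inv_le (by positivity) (by positivity) (by positivity)
          (by rwa [inv_div])
    _ = (n : ℝ) ^ (-(η₁ * p n) / 4) := by
        rw [← rpow_add hn0]
        ring_nf

/-- Lemma on the annulus contribution.
If `∇ g_n (θ̂_n) = 0`, every eigenvalue of `−g_n''(θ)` lies in `[η₁ n, η₂ n]` on the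
`δ`-ball around `θ̂_n`, and `p(n) ≤ A n^α` with `α < 1`, then there is `N`, depending only on
`η₁, η₂, δ, A, α`, such that for all `n ≥ N` the normalized integral of
`exp(g_n(θ) − g_n(θ̂_n))` over the annulus `γ_n < ‖θ − θ̂_n‖₂ ≤ δ` is at most `n^{−η₁ p / 4}`. -/
theorem annulus_contribution_bound
    (δ η₁ η₂ A α : ℝ) (hδ : 0 < δ) (hη₁ : 0 < η₁) (hη₁₂ : η₁ ≤ η₂)
    (hA : 0 < A) (hα0 : 0 < α) (hα : α < 1) :
    ∃ N : ℕ, ∀ (p : ℕ → ℕ) (g : (n : ℕ) → E (p n) → ℝ) (θhat : (n : ℕ) → E (p n)),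
      (∀ n, (p n : ℝ) ≤ A * (n : ℝ) ^ α) →
      (∀ n, ContDiff ℝ 2 (g n)) →
      (∀ n, fderiv ℝ (g n) (θhat n) = 0) →
      (∀ n, ∀ θ : E (p n), ‖θ - θhat n‖ ≤ δ →
        eigsIn (-(hess (g n) θ)) (η₁ * n) (η₂ * n)) →
      ∀ n ≥ N,
        Real.sqrt ((-(hess (g n) (θhat n))).det) * (2 * π) ^ (-(p n : ℝ) / 2) *
          (∫ θ in {θ : E (p n) | gam (p n) n < ‖θ - θhat n‖ ∧ ‖θ - θhat n‖ ≤ δ},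
            Real.exp (g n θ - g n (θhat n)))
        ≤ (n : ℝ) ^ (-(η₁ * p n) / 4) :=
  annulus_contribution_bound_general δ η₁ η₂ A α hδ hη₁ hη₁₂
end
end

section
/- Define, for j,k ≤ p, the matrices A_j = n^{3/2} Σ_{l=1}^p (Σ^{−1/2})_{lj} Σ^{−1/2} G_l Σ^{−1/2} and B_{jk} = n² Σ_{l=1}^p Σ_{m=1}^p (Σ^{−1/2})_{lj} (Σ^{−1/2})_{mk} Σ^{−1/2} H_{lm} Σ^{−1/2}. Then: (i) with the change of variables θ = n^{1/2} Σ^{−1/2} θ̄, one has Σ_{j=1}^p θ_j (θᵀ G_j θ) = Σ_{j=1}^p θ̄_j (θ̄ᵀ A_j θ̄) and Σ_{j,k=1}^p θ_j θ_k (θᵀ H_{jk} θ) = Σ_{j,k=1}^p θ̄_j θ̄_k (θ̄ᵀ B_{jk} θ̄) for all θ̄ ∈ ℝ^p; and (ii) there exists a constant C depending only on η₁, η₂, η₃, η₄, η₅, η₆, c such that the operator norms satisfy ‖A_j‖_op ≤ C p^{c_∞} n^{c₃} and ‖B_{jk}‖_op ≤ C p^{2c_∞} n^{c₄} for all j,k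 ≤ p. -/
/-! With `θ = √n • R θ̄` and `R = Σ^{-1/2}` symmetric, every quadratic form becomes
`θᵀ M θ = n • θ̄ᵀ (R M R) θ̄`, and the outer factors `θ_j = √n (R θ̄)_j` move onto the
coefficient matrices by transposing `R`; this is (i).

For (ii), `‖R X R‖ ≤ ‖R R‖ ‖X‖ = ‖Σ⁻¹‖ ‖X‖`, where `‖Σ⁻¹‖ ≤ (η₁ n)⁻¹` and
`‖G_l‖ ≤ max |η₃| |η₄| n^{c₃}` because the spectral norm of a symmetric matrix is its spectral
radius. The weights `(Σ^{-1/2})_{lj}` cost at most a column sum of `R`, which by symmetry is at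
most `‖R‖_∞ ≤ c p^{c_∞} n^{-1/2}`; collecting the powers of `n` gives the bounds. -/

open MeasureTheory Real Filter Matrix

noncomputable section

/-- quadratic form `vᵀ M v`. -/
def qf {p : ℕ} (M : Matrix (Fin p) (Fin p) ℝ) (v : Fin p → ℝ) : ℝ :=
  v ⬝ᵥ M.mulVec v

/-- Operator (spectral) norm of a real matrix, via the induced map on Euclidean spaces. -/
def opNorm {p q : ℕ} (M : Matrix (Fin p) (Fin q) ℝ) : ℝ :=
  ‖LinearMap.toContinuousLinearMap (Matrix.toEuclideanLin M)‖

/-- `A_j = n^{3/2} Σ_l (Σ^{−1/2})_{lj} Σ^{−1/2} G_l Σ^{−1/2}`, with `R = Σ^{−1/2}`. -/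
def Amat {p : ℕ} (n : ℕ) (R : Matrix (Fin p) (Fin p) ℝ)
    (G : Fin p → Matrix (Fin p) (Fin p) ℝ) (j : Fin p) : Matrix (Fin p) (Fin p) ℝ :=
  (n : ℝ) ^ ((3 : ℝ) / 2) • ∑ l, R l j • (R * G l * R)

/-- `B_{jk} = n² Σ_l Σ_m (Σ^{−1/2})_{lj} (Σ^{−1/2})_{mk} Σ^{−1/2} H_{lm} Σ^{−1/2}`. -/
def Bmat {p : ℕ} (n : ℕ) (R : Matrix (Fin p) (Fin p) ℝ)
    (H : Fin p → Fin p → Matrix (Fin p) (Fin p) ℝ) (j k : Fin p) :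
    Matrix (Fin p) (Fin p) ℝ :=
  ((n : ℝ) ^ 2) • ∑ l, ∑ m, (R l j * R m k) • (R * H l m * R)

open scoped Matrix.Norms.L2Operator

section QuadraticForms

variable {p : ℕ}

lemma qf_eq_sum (M : Matrix (Fin p) (Fin p) ℝ) (v : Fin p → ℝ) :
    qf M v = ∑ j, ∑ k, v j * v k * M j k := by
  simp only [qf, dotProduct, mulVec, Finset.mul_sum]
  exact Finset.sum_congr rfl fun j _ => Finset.sum_congr rfl fun k _ => by ring

lemma qf_smul_left (a : ℝ) (M : Matrix (Fin p) (Fin p) ℝ) (v : Fin p → ℝ) :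
    qf (a • M) v = a * qf M v := by
  simp [qf, smul_mulVec, dotProduct_smul]

lemma qf_sum_left {ι : Type*} (s : Finset ι) (M : ι → Matrix (Fin p) (Fin p) ℝ)
    (v : Fin p → ℝ) : qf (∑ i ∈ s, M i) v = ∑ i ∈ s, qf (M i) v := by
  simp [qf, Matrix.sum_mulVec, dotProduct_sum]

lemma qf_smul_right (a : ℝ) (M : Matrix (Fin p) (Fin p) ℝ) (v : Fin p → ℝ) :
    qf M (a • v) = a ^ 2 * qf M v := by
  simp only [qf, mulVec_smul, smul_dotProduct, dotProduct_smul, smul_eq_mul]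
  ring

lemma qf_mulVec (M R : Matrix (Fin p) (Fin p) ℝ) (v : Fin p → ℝ) :
    qf M (R *ᵥ v) = qf (Rᵀ * M * R) v := by
  simp only [qf, ← mulVec_mulVec, dotProduct_mulVec, vecMul_transpose]

end QuadraticForms

section ChangeOfVariables

variable {p : ℕ}

def cubicForm (G : Fin p → Matrix (Fin p) (Fin p) ℝ) (θ : Fin p → ℝ) : ℝ :=
  ∑ j, θ j * qf (G j) θ

def quarticForm (H : Fin p → Fin p → Matrix (Fin p) (Fin p) ℝ) (θ : Fin p → ℝ) : ℝ :=
  ∑ j, ∑ k, θ j * θ k * qf (H j k) θ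

lemma cubicForm_smul (G : Fin p → Matrix (Fin p) (Fin p) ℝ) (a : ℝ) (θ : Fin p → ℝ) :
    cubicForm G (a • θ) = cubicForm (fun j => a ^ 3 • G j) θ := by
  simp only [cubicForm, qf_smul_right, qf_smul_left, Pi.smul_apply, smul_eq_mul]
  exact Finset.sum_congr rfl fun j _ => by ring

lemma quarticForm_smul (H : Fin p → Fin p → Matrix (Fin p) (Fin p) ℝ) (a : ℝ)
    (θ : Fin p → ℝ) :
    quarticForm H (a • θ) = quarticForm (fun j k => a ^ 4 • H j k) θ := by
  simp only [quarticForm, qf_smul_right, qf_smul_left, Pi.smul_apply, smul_eq_mul]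
  exact Finset.sum_congr rfl fun j _ => Finset.sum_congr rfl fun k _ => by ring

lemma cubicForm_mulVec (G : Fin p → Matrix (Fin p) (Fin p) ℝ) (R : Matrix (Fin p) (Fin p) ℝ)
    (θ : Fin p → ℝ) :
    cubicForm G (R *ᵥ θ) = cubicForm (fun l => ∑ j, R j l • (Rᵀ * G j * R)) θ := by
  set q : Fin p → ℝ := fun j => qf (Rᵀ * G j * R) θ
  calc cubicForm G (R *ᵥ θ) = (R *ᵥ θ) ⬝ᵥ q := by simp only [cubicForm, qf_mulVec, dotProduct, q]
    _ = θ ⬝ᵥ (q ᵥ* R) := by rw [dotProduct_comm, dotProduct_mulVec, dotProduct_comm]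
    _ = _ := by
      simp only [cubicForm, qf_sum_left, qf_smul_left, dotProduct, vecMul, q]
      exact Finset.sum_congr rfl fun l _ => by simp only [mul_comm]

lemma quarticForm_mulVec (H : Fin p → Fin p → Matrix (Fin p) (Fin p) ℝ)
    (R : Matrix (Fin p) (Fin p) ℝ) (θ : Fin p → ℝ) :
    quarticForm H (R *ᵥ θ) =
      quarticForm (fun l m => ∑ j, ∑ k, (R j l * R k m) • (Rᵀ * H j k * R)) θ := by
  set Q : Matrix (Fin p) (Fin p) ℝ := Matrix.of fun j k => qf (Rᵀ * H j k * R) θ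
  have hQ : ∀ l m, (Rᵀ * Q * R) l m = ∑ j, ∑ k, (R j l * R k m) * Q j k := fun l m => by
    simp only [mul_apply, transpose_apply, Finset.sum_mul]
    rw [Finset.sum_comm]
    exact Finset.sum_congr rfl fun j _ => Finset.sum_congr rfl fun k _ => by ring
  calc quarticForm H (R *ᵥ θ) = qf Q (R *ᵥ θ) := by
        rw [qf_eq_sum]; simp only [quarticForm, qf_mulVec, Q, of_apply]
    _ = qf (Rᵀ * Q * R) θ := qf_mulVec Q R θ
    _ = _ := by
      rw [qf_eq_sum (Rᵀ * Q * R)]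
      simp only [hQ, quarticForm, qf_sum_left, qf_smul_left, Q, of_apply]

end ChangeOfVariables

section Rescaling

variable {p : ℕ} {R : Matrix (Fin p) (Fin p) ℝ}

lemma sqrt_pow_three {x : ℝ} (hx : 0 ≤ x) : √x ^ 3 = x ^ ((3 : ℝ) / 2) := by
  rw [Real.sqrt_eq_rpow, ← Real.rpow_mul_natCast hx]
  norm_num

lemma Amat_eq_of_transpose_eq (hR : Rᵀ = R) (n : ℕ) (G : Fin p → Matrix (Fin p) (Fin p) ℝ) :
    Amat n R G = fun l => √(n : ℝ) ^ 3 • ∑ j, R j l • (Rᵀ * G j * R) := by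
  funext l
  rw [Amat, sqrt_pow_three n.cast_nonneg, hR]

lemma Bmat_eq_of_transpose_eq (hR : Rᵀ = R) (n : ℕ)
    (H : Fin p → Fin p → Matrix (Fin p) (Fin p) ℝ) :
    Bmat n R H = fun l m => √(n : ℝ) ^ 4 • ∑ j, ∑ k, (R j l * R k m) • (Rᵀ * H j k * R) := by
  funext l m
  rw [Bmat, show 4 = 2 * 2 by rfl, pow_mul, Real.sq_sqrt n.cast_nonneg, hR]

lemma cubicForm_sqrt_smul_mulVec (hR : Rᵀ = R) (n : ℕ)
    (G : Fin p → Matrix (Fin p) (Fin p) ℝ) (θ : Fin p → ℝ) :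
    cubicForm G (√(n : ℝ) • R *ᵥ θ) = cubicForm (Amat n R G) θ := by
  rw [← mulVec_smul, cubicForm_mulVec, cubicForm_smul, Amat_eq_of_transpose_eq hR]

lemma quarticForm_sqrt_smul_mulVec (hR : Rᵀ = R) (n : ℕ)
    (H : Fin p → Fin p → Matrix (Fin p) (Fin p) ℝ) (θ : Fin p → ℝ) :
    quarticForm H (√(n : ℝ) • R *ᵥ θ) = quarticForm (Bmat n R H) θ := by
  rw [← mulVec_smul, quarticForm_mulVec, quarticForm_smul, Bmat_eq_of_transpose_eq hR]

end Rescaling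

namespace Matrix

variable {n : Type*} [Fintype n] [DecidableEq n]

theorem IsHermitian.l2_opNorm_le_of_forall_spectrum {M : Matrix n n ℝ} (hM : M.IsHermitian)
    {b : ℝ} (hb : 0 ≤ b) (h : ∀ x ∈ spectrum ℝ M, |x| ≤ b) : ‖M‖ ≤ b := by
  have hsa : IsSelfAdjoint (toEuclideanCLM (n := n) (𝕜 := ℝ) M) := hM.isSelfAdjoint.map _
  have hσ : spectrum ℝ (toEuclideanCLM (n := n) (𝕜 := ℝ) M) = spectrum ℝ M :=
    AlgEquiv.spectrum_eq (toEuclideanCLM (n := n) (𝕜 := ℝ)).toAlgEquiv M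
  rw [cstar_norm_def, ← coe_nnnorm, ← NNReal.coe_mk b hb, NNReal.coe_le_coe, ← ENNReal.coe_le_coe,
    ← ContinuousLinearMap.spectralRadius_eq_nnnorm _ hsa, spectralRadius, hσ]
  refine iSup₂_le fun x hx => ?_
  rw [ENNReal.coe_le_coe, ← NNReal.coe_le_coe, coe_nnnorm, Real.norm_eq_abs]
  exact h x hx

theorem IsHermitian.l2_opNorm_le_max_abs {M : Matrix n n ℝ} (hM : M.IsHermitian) {a b : ℝ}
    (h : ∀ i, a ≤ hM.eigenvalues i ∧ hM.eigenvalues i ≤ b) : ‖M‖ ≤ max |a| |b| := by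
  refine hM.l2_opNorm_le_of_forall_spectrum (by positivity) fun x hx => ?_
  obtain ⟨i, rfl⟩ := hM.spectrum_real_eq_range_eigenvalues ▸ hx
  exact abs_le_max_abs_abs (h i).1 (h i).2

theorem IsHermitian.l2_opNorm_inv_le {S : Matrix n n ℝ} (hS : S.IsHermitian) {a : ℝ}
    (ha : 0 < a) (h : ∀ i, a ≤ hS.eigenvalues i) : ‖S⁻¹‖ ≤ a⁻¹ := by
  have hunit : IsUnit S := by
    rw [isUnit_iff_isUnit_det, hS.det_eq_prod_eigenvalues]
    exact (Finset.prod_pos fun i _ => ha.trans_le (h i)).ne'.isUnit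
  refine hS.inv.l2_opNorm_le_of_forall_spectrum (inv_nonneg.2 ha.le) fun x hx => ?_
  obtain ⟨u, rfl⟩ := hunit
  rw [← coe_units_inv, ← spectrum.inv₀_mem_iff, hS.spectrum_real_eq_range_eigenvalues] at hx
  obtain ⟨i, hi⟩ := hx
  have hx : 0 < x := inv_pos.1 (hi ▸ ha.trans_le (h i))
  rw [abs_of_pos hx, ← inv_inv x, ← hi]
  exact inv_anti₀ ha (h i)

theorem IsHermitian.l2_opNorm_mul_mul_le {R : Matrix n n ℝ} (hR : R.IsHermitian)
    (X : Matrix n n ℝ) : ‖R * X * R‖ ≤ ‖R * R‖ * ‖X‖ := by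
  have hRR : ‖R * R‖ = ‖R‖ * ‖R‖ := by rw [← l2_opNorm_conjTranspose_mul_self, hR.eq]
  calc ‖R * X * R‖ ≤ ‖R‖ * ‖X‖ * ‖R‖ :=
        (l2_opNorm_mul _ _).trans (by gcongr; exact l2_opNorm_mul _ _)
    _ = ‖R * R‖ * ‖X‖ := by rw [hRR]; ring

end Matrix

lemma norm_sum_smul_le_of_norm_le {ι E : Type*} [SeminormedAddCommGroup E] [NormedSpace ℝ E]
    (s : Finset ι) (w : ι → ℝ) {X : ι → E} {b : ℝ} (hX : ∀ i ∈ s, ‖X i‖ ≤ b) :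
    ‖∑ i ∈ s, w i • X i‖ ≤ (∑ i ∈ s, |w i|) * b := by
  rw [Finset.sum_mul]
  refine (norm_sum_le _ _).trans (Finset.sum_le_sum fun i hi => ?_)
  rw [norm_smul, Real.norm_eq_abs]
  exact mul_le_mul_of_nonneg_left (hX i hi) (abs_nonneg _)

section Bounds

variable {p : ℕ}

lemma sum_abs_le_maxRowSum (M : Matrix (Fin p) (Fin p) ℝ) (i : Fin p) :
    ∑ k, |M i k| ≤ maxRowSum M :=
  le_ciSup (f := fun i => ∑ k, |M i k|) (Finite.bddAbove_range _) i

lemma sum_abs_col_le_maxRowSum {R : Matrix (Fin p) (Fin p) ℝ} (hR : Rᵀ = R) (j : Fin p) :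
    ∑ l, |R l j| ≤ maxRowSum R := by
  calc ∑ l, |R l j| = ∑ l, |Rᵀ j l| := rfl
    _ ≤ maxRowSum R := by simpa only [hR] using sum_abs_le_maxRowSum Rᵀ j

lemma eigsIn.l2_opNorm_le_mul {M : Matrix (Fin p) (Fin p) ℝ} {a b t : ℝ}
    (h : eigsIn M (a * t) (b * t)) (ht : 0 ≤ t) : ‖M‖ ≤ max |a| |b| * t := by
  obtain ⟨hM, hev⟩ := h
  simpa only [abs_mul, abs_of_nonneg ht, max_mul_of_nonneg _ _ ht] using
    hM.l2_opNorm_le_max_abs hev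

lemma eigsIn.l2_opNorm_inv_le {S : Matrix (Fin p) (Fin p) ℝ} {a b : ℝ} (h : eigsIn S a b)
    (ha : 0 < a) : ‖S⁻¹‖ ≤ a⁻¹ :=
  h.1.l2_opNorm_inv_le ha fun i => (h.2 i).1

lemma eigsIn.pos_of_posDef {S : Matrix (Fin p) (Fin p) ℝ} {a b : ℝ} (h : eigsIn S a b)
    (hS : S.PosDef) (i : Fin p) : 0 < b :=
  (hS.eigenvalues_pos i).trans_le (h.2 i).2

variable {R : Matrix (Fin p) (Fin p) ℝ}

lemma l2_opNorm_Amat_le (hR : R.IsHermitian) (n : ℕ) {G : Fin p → Matrix (Fin p) (Fin p) ℝ}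
    {j : Fin p} {ρ s g : ℝ} (hcol : ∑ l, |R l j| ≤ ρ) (hRR : ‖R * R‖ ≤ s)
    (hG : ∀ l, ‖G l‖ ≤ g) :
    ‖Amat n R G j‖ ≤ (n : ℝ) ^ ((3 : ℝ) / 2) * (ρ * (s * g)) := by
  have hg : 0 ≤ g := (norm_nonneg _).trans (hG j)
  have hs : 0 ≤ s := (norm_nonneg _).trans hRR
  rw [Amat, norm_smul, Real.norm_of_nonneg (by positivity)]
  gcongr
  refine (norm_sum_smul_le_of_norm_le _ _ fun l _ => ?_).trans (by gcongr)
  exact (hR.l2_opNorm_mul_mul_le _).trans (by gcongr; exact hG l)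

lemma l2_opNorm_Bmat_le (hR : R.IsHermitian) (n : ℕ)
    {H : Fin p → Fin p → Matrix (Fin p) (Fin p) ℝ} {j k : Fin p} {ρ s h : ℝ}
    (hcolj : ∑ l, |R l j| ≤ ρ) (hcolk : ∑ m, |R m k| ≤ ρ) (hRR : ‖R * R‖ ≤ s)
    (hH : ∀ l m, ‖H l m‖ ≤ h) :
    ‖Bmat n R H j k‖ ≤ (n : ℝ) ^ 2 * (ρ * (ρ * (s * h))) := by
  have hh : 0 ≤ h := (norm_nonneg _).trans (hH j k)
  have hs : 0 ≤ s := (norm_nonneg _).trans hRR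
  have hρ : 0 ≤ ρ := (Finset.sum_nonneg fun l _ => abs_nonneg _).trans hcolk
  rw [Bmat, norm_smul, Real.norm_of_nonneg (by positivity)]
  simp only [mul_smul, ← Finset.smul_sum]
  gcongr
  refine (norm_sum_smul_le_of_norm_le _ _ fun l _ => ?_).trans (by gcongr)
  refine (norm_sum_smul_le_of_norm_le _ _ fun m _ => ?_).trans (by gcongr)
  exact (hR.l2_opNorm_mul_mul_le _).trans (by gcongr; exact hH l m)

end Bounds

lemma collect_powers_cubic {x : ℝ} (hx : 0 < x) {η : ℝ} (hη : η ≠ 0) (c K y z : ℝ) :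
    x ^ ((3 : ℝ) / 2) * (c * y / x ^ ((1 : ℝ) / 2) * ((η * x)⁻¹ * (K * z))) =
      c * K / η * y * z := by
  rw [show (3 : ℝ) / 2 = 1 / 2 + 1 by norm_num, Real.rpow_add hx, Real.rpow_one]
  have : x ^ ((1 : ℝ) / 2) ≠ 0 := (Real.rpow_pos_of_pos hx _).ne'
  field_simp

lemma collect_powers_quartic {x : ℝ} (hx : 0 < x) {η : ℝ} (hη : η ≠ 0) (c K y z : ℝ) :
    x ^ 2 * (c * y / x ^ ((1 : ℝ) / 2) * (c * y / x ^ ((1 : ℝ) / 2) * ((η * x)⁻¹ * (K * z)))) =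
      c ^ 2 * K / η * y ^ 2 * z := by
  have h : x ^ ((1 : ℝ) / 2) * x ^ ((1 : ℝ) / 2) = x := by
    rw [← Real.rpow_add hx]; norm_num
  have : x ^ ((1 : ℝ) / 2) ≠ 0 := (Real.rpow_pos_of_pos hx _).ne'
  rw [show x ^ 2 = x ^ ((1 : ℝ) / 2) * x ^ ((1 : ℝ) / 2) * x by rw [h, sq]]
  field_simp

theorem rescaled_cubic_quartic_forms_general
    (η₁ η₂ η₃ η₄ η₅ η₆ c c₃ c₄ cinf : ℝ)
    (hη₁ : 0 < η₁) :
    ∃ C > 0, ∀ (n p : ℕ) (S R : Matrix (Fin p) (Fin p) ℝ)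
      (G : Fin p → Matrix (Fin p) (Fin p) ℝ)
      (H : Fin p → Fin p → Matrix (Fin p) (Fin p) ℝ),
      -- Σ symmetric positive definite with eigenvalues in [η₁ n, η₂ n]
      S.PosDef → eigsIn S (η₁ * n) (η₂ * n) →
      -- R = Σ^{−1/2}: the positive semidefinite square root of Σ⁻¹
      R.PosSemidef → R * R = S⁻¹ →
      maxRowSum R ≤ c * (p : ℝ) ^ cinf / (n : ℝ) ^ ((1 : ℝ) / 2) →
      -- eigenvalue bounds for G_l and H_{lm}
      (∀ l, eigsIn (G l) (η₃ * (n : ℝ) ^ c₃) (η₄ * (n : ℝ) ^ c₃)) →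
      (∀ l m, eigsIn (H l m) (η₅ * (n : ℝ) ^ c₄) (η₆ * (n : ℝ) ^ c₄)) →
      -- (i) change of variables θ = n^{1/2} Σ^{−1/2} θ̄
      (∀ θb : Fin p → ℝ,
        (∑ j, (Real.sqrt n • R.mulVec θb) j * qf (G j) (Real.sqrt n • R.mulVec θb)
          = ∑ j, θb j * qf (Amat n R G j) θb) ∧
        (∑ j, ∑ k, (Real.sqrt n • R.mulVec θb) j * (Real.sqrt n • R.mulVec θb) k *
              qf (H j k) (Real.sqrt n • R.mulVec θb)
          = ∑ j, ∑ k, θb j * θb k * qf (Bmat n R H j k) θb)) ∧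
      -- (ii) operator norm bounds
      (∀ j, opNorm (Amat n R G j) ≤ C * (p : ℝ) ^ cinf * (n : ℝ) ^ c₃) ∧
      (∀ j k, opNorm (Bmat n R H j k) ≤ C * (p : ℝ) ^ (2 * cinf) * (n : ℝ) ^ c₄) := by
  set K₃ := max |η₃| |η₄|
  set K₄ := max |η₅| |η₆|
  refine ⟨max (max (c * K₃ / η₁) (c ^ 2 * K₄ / η₁)) 1, by positivity, ?_⟩
  intro n p S R G H hS hSeig hR hRR hRow hG hH
  have hRt : Rᵀ = R := by rw [← conjTranspose_eq_transpose_of_trivial, hR.isHermitian.eq]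
  refine ⟨fun θ => ⟨cubicForm_sqrt_smul_mulVec hRt n G θ,
    quarticForm_sqrt_smul_mulVec hRt n H θ⟩, ?_⟩
  rcases isEmpty_or_nonempty (Fin p) with hp | ⟨⟨i⟩⟩
  · exact ⟨isEmptyElim, isEmptyElim⟩
  have hn : (0 : ℝ) < n :=
    (Nat.cast_nonneg n).lt_of_ne' (right_ne_zero_of_mul (hSeig.pos_of_posDef hS i).ne')
  have hRR : ‖R * R‖ ≤ (η₁ * n)⁻¹ := hRR ▸ hSeig.l2_opNorm_inv_le (by positivity)
  have hcol : ∀ j, ∑ l, |R l j| ≤ c * (p : ℝ) ^ cinf / (n : ℝ) ^ ((1 : ℝ) / 2) :=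
    fun j => (sum_abs_col_le_maxRowSum hRt j).trans hRow
  have hG : ∀ l, ‖G l‖ ≤ K₃ * (n : ℝ) ^ c₃ := fun l => (hG l).l2_opNorm_le_mul (by positivity)
  have hH : ∀ l m, ‖H l m‖ ≤ K₄ * (n : ℝ) ^ c₄ :=
    fun l m => (hH l m).l2_opNorm_le_mul (by positivity)
  refine ⟨fun j => ?_, fun j k => ?_⟩
  · calc opNorm (Amat n R G j)
        ≤ _ := l2_opNorm_Amat_le hR.isHermitian n (hcol j) hRR hG
      _ = c * K₃ / η₁ * (p : ℝ) ^ cinf * (n : ℝ) ^ c₃ := collect_powers_cubic hn hη₁.ne' ..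
      _ ≤ _ := by gcongr; exact (le_max_left _ _).trans (le_max_left _ _)
  · calc opNorm (Bmat n R H j k)
        ≤ _ := l2_opNorm_Bmat_le hR.isHermitian n (hcol j) (hcol k) hRR hH
      _ = c ^ 2 * K₄ / η₁ * ((p : ℝ) ^ cinf) ^ 2 * (n : ℝ) ^ c₄ :=
        collect_powers_quartic hn hη₁.ne' ..
      _ ≤ _ := by
        rw [← Real.rpow_mul_natCast (Nat.cast_nonneg p), Nat.cast_ofNat, mul_comm cinf]
        gcongr
        exact (le_max_right _ _).trans (le_max_left _ _)

/-- change of variables and operator-norm bounds for the rescaled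
third- and fourth-derivative arrays. -/
theorem rescaled_cubic_quartic_forms
    (η₁ η₂ η₃ η₄ η₅ η₆ c c₃ c₄ cinf : ℝ)
    (hη₁ : 0 < η₁) (h12 : η₁ ≤ η₂) (h34 : η₃ ≤ η₄) (h56 : η₅ ≤ η₆)
    (hc : 0 < c) (hcinf0 : 0 ≤ cinf) (hcinf : cinf ≤ 1 / 2) :
    ∃ C > 0, ∀ (n p : ℕ) (S R : Matrix (Fin p) (Fin p) ℝ)
      (G : Fin p → Matrix (Fin p) (Fin p) ℝ)
      (H : Fin p → Fin p → Matrix (Fin p) (Fin p) ℝ),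
      -- Σ symmetric positive definite with eigenvalues in [η₁ n, η₂ n]
      S.PosDef → eigsIn S (η₁ * n) (η₂ * n) →
      -- R = Σ^{−1/2}: the positive semidefinite square root of Σ⁻¹
      R.PosSemidef → R * R = S⁻¹ →
      maxRowSum R ≤ c * (p : ℝ) ^ cinf / (n : ℝ) ^ ((1 : ℝ) / 2) →
      -- eigenvalue bounds for G_l and H_{lm}
      (∀ l, eigsIn (G l) (η₃ * (n : ℝ) ^ c₃) (η₄ * (n : ℝ) ^ c₃)) →
      (∀ l m, eigsIn (H l m) (η₅ * (n : ℝ) ^ c₄) (η₆ * (n : ℝ) ^ c₄)) →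
      -- (i) change of variables θ = n^{1/2} Σ^{−1/2} θ̄
      (∀ θb : Fin p → ℝ,
        (∑ j, (Real.sqrt n • R.mulVec θb) j * qf (G j) (Real.sqrt n • R.mulVec θb)
          = ∑ j, θb j * qf (Amat n R G j) θb) ∧
        (∑ j, ∑ k, (Real.sqrt n • R.mulVec θb) j * (Real.sqrt n • R.mulVec θb) k *
              qf (H j k) (Real.sqrt n • R.mulVec θb)
          = ∑ j, ∑ k, θb j * θb k * qf (Bmat n R H j k) θb)) ∧
      -- (ii) operator norm bounds
      (∀ j, opNorm (Amat n R G j) ≤ C * (p : ℝ) ^ cinf * (n : ℝ) ^ c₃) ∧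
      (∀ j k, opNorm (Bmat n R H j k) ≤ C * (p : ℝ) ^ (2 * cinf) * (n : ℝ) ^ c₄) :=
  rescaled_cubic_quartic_forms_general η₁ η₂ η₃ η₄ η₅ η₆ c c₃ c₄ cinf hη₁
end
end

section
/- Suppose p(n) ≤ A n^α with α < 1/2 − 1/(2ζ−2), and that for all indices j₁,…,j_{ζ−2} ≤ p and all θ⋆ with ‖θ⋆−θ̂_n‖₂ ≤ √2 γ_n, the symmetric p×p matrix with (j,k) entry ∂^ζ g_n/∂θ_j∂θ_k∂θ_{j₁}⋯∂θ_{j_{ζ−2}}(θ⋆) has all eigenvalues in [B_ζ n, C_ζ n]. Then there exist constants C > 0 and N ∈ ℕ, depending only on ζ, B_ζ, C_ζ, A, α, such that for all n ≥ N, all θ ∈ ℝ^p with ‖θ‖₂ ≤ √2 γ_n, and all θ̃ on the segment joining θ̂_n and θ̂_n + θ: |exp(R_ζ(θ, θ̃)) − 1| ≤ C p^{ζ−1} log^{ζ/2}(n) / n^{(ζ−2)/2}, and in particular |R_ζ(θ, θ̃)| ≤ C p^{ζ−1} log^{ζ/2}(n) / n^{(ζ−2)/2}. -/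
/-!
Split each index tuple of the `ζ`-fold sum in `R_ζ(θ, θ̃)` into its first two entries and a tail
`t` of length `ζ - 2`. For fixed `t` the sum over the first two entries is the quadratic form
`θᵀ M_t θ` of a slice matrix of the `ζ`-th derivative, which the eigenvalue hypothesis bounds by
`max(|B_ζ|, |C_ζ|) n ‖θ‖₂²`; summing `∏ |θ_{t_i}|` over the tails gives
`‖θ‖₁^{ζ-2} ≤ (√p ‖θ‖₂)^{ζ-2}`. With `‖θ‖₂ ≤ √2 γ_n` this yields
`|R_ζ| ≤ c p^{ζ-1} log^{ζ/2} n / n^{(ζ-2)/2}`, and `p ≤ A n^α` bounds the right-hand side by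
`c A^{ζ-1} log^{ζ/2} n / n^{(ζ-2)/2 - α(ζ-1)}`, which tends to `0` because
`α < 1/2 - 1/(2ζ-2)` means exactly `α(ζ-1) < (ζ-2)/2`. Once `|R_ζ| ≤ 1`,
`|exp R_ζ - 1| ≤ 2 |R_ζ|`.
-/

open MeasureTheory Real Filter Matrix

noncomputable section

/-- Replace the first two entries of an index tuple by `a` and `b`. -/
def setFront {m p : ℕ} (a b : Fin p) (w : Fin m → Fin p) : Fin m → Fin p :=
  fun i => if (i : ℕ) = 0 then a else if (i : ℕ) = 1 then b else w i

/-- The `ζ`-th order Taylor remainder term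
`R_ζ(θ, θ⋆) = (1/ζ!) Σ_{k₁,…,k_ζ} θ_{k₁} ⋯ θ_{k_ζ} ∂^ζ g/∂θ_{k₁}⋯∂θ_{k_ζ}(θ⋆)`. -/
def Rrem {p : ℕ} (ζ : ℕ) (g : E p → ℝ) (θ θs : E p) : ℝ :=
  (1 / (Nat.factorial ζ : ℝ)) * ∑ v : Fin ζ → Fin p, (∏ i, θ (v i)) * pd ζ g θs v

lemma Matrix.IsHermitian.abs_dotProduct_mulVec_le {ι : Type*} [Fintype ι] [DecidableEq ι]
    {M : Matrix ι ι ℝ} (hM : M.IsHermitian) {c : ℝ} (hc : ∀ i, |hM.eigenvalues i| ≤ c)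
    (x : ι → ℝ) : |x ⬝ᵥ M *ᵥ x| ≤ c * (x ⬝ᵥ x) := by
  set U : Matrix ι ι ℝ := (hM.eigenvectorUnitary : Matrix ι ι ℝ)
  have hU : U * Uᵀ = 1 := by
    simpa [U, Matrix.star_eq_conjTranspose] using
      (Matrix.mem_unitaryGroup_iff).mp hM.eigenvectorUnitary.2
  set y := Uᵀ *ᵥ x
  have hyy : y ⬝ᵥ y = x ⬝ᵥ x := by
    rw [dotProduct_mulVec, vecMul_transpose, mulVec_mulVec, hU, one_mulVec]
  have hxMx : x ⬝ᵥ M *ᵥ x = ∑ i, hM.eigenvalues i * (y i * y i) := by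
    conv_lhs => rw [hM.spectral_theorem, Unitary.conjStarAlgAut_apply]
    rw [← mulVec_mulVec, ← mulVec_mulVec, dotProduct_mulVec, ← mulVec_transpose,
      star_eq_conjTranspose, conjTranspose_eq_transpose_of_trivial]
    simp only [dotProduct, mulVec_diagonal]
    refine Finset.sum_congr rfl fun i _ => ?_
    simp only [Function.comp_apply, RCLike.ofReal_real_eq_id, id, y, U]
    ring
  calc |x ⬝ᵥ M *ᵥ x| ≤ ∑ i, |hM.eigenvalues i| * (y i * y i) := by
        rw [hxMx]
        refine (Finset.abs_sum_le_sum_abs _ _).trans_eq (Finset.sum_congr rfl fun i _ => ?_)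
        rw [abs_mul, abs_of_nonneg (mul_self_nonneg (y i))]
    _ ≤ ∑ i, c * (y i * y i) :=
        Finset.sum_le_sum fun i _ => mul_le_mul_of_nonneg_right (hc i) (mul_self_nonneg _)
    _ = c * (x ⬝ᵥ x) := by rw [← Finset.mul_sum, ← hyy, dotProduct]

lemma eigsIn.abs_sum_mul_mul_le {p : ℕ} {M : Matrix (Fin p) (Fin p) ℝ} {a b : ℝ}
    (h : eigsIn M a b) (x : E p) :
    |∑ j, ∑ k, x j * x k * M j k| ≤ max |a| |b| * ‖x‖ ^ 2 := by
  obtain ⟨hM, hab⟩ := h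
  have hc : ∀ i, |hM.eigenvalues i| ≤ max |a| |b| := fun i =>
    abs_le_max_abs_abs (hab i).1 (hab i).2
  have hx : ‖x‖ ^ 2 = ⇑x ⬝ᵥ ⇑x := by
    simp only [EuclideanSpace.real_norm_sq_eq, dotProduct, ← sq]
  have hxMx : ∑ j, ∑ k, x j * x k * M j k = ⇑x ⬝ᵥ M *ᵥ ⇑x := by
    simp only [dotProduct, mulVec, Finset.mul_sum]
    exact Finset.sum_congr rfl fun j _ => Finset.sum_congr rfl fun k _ => by ring
  rw [hx, hxMx]
  exact hM.abs_dotProduct_mulVec_le hc x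

lemma Fintype.sum_fin_add_two_pi {ι : Type*} [Fintype ι] {m : ℕ}
    (f : (Fin (m + 2) → ι) → ℝ) :
    ∑ v, f v = ∑ t : Fin m → ι, ∑ a, ∑ b, f (Fin.cons a (Fin.cons b t)) := by
  have cons_sum : ∀ (k : ℕ) (F : (Fin (k + 1) → ι) → ℝ),
      ∑ v, F v = ∑ a, ∑ u : Fin k → ι, F (Fin.cons a u) := fun k F => by
    rw [← (Fin.consEquiv fun _ => ι).sum_comp, Fintype.sum_prod_type]
    rfl
  simp only [cons_sum, Finset.sum_comm (γ := Fin m → ι)]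

lemma Fin.prod_cons_cons {ι : Type*} {m : ℕ} (x : ι → ℝ) (a b : ι) (t : Fin m → ι) :
    ∏ i, x ((Fin.cons a (Fin.cons b t) : Fin (m + 2) → ι) i) = x a * x b * ∏ i, x (t i) := by
  simp [Fin.prod_univ_succ, mul_assoc]

lemma abs_sum_prod_mul_le {ι : Type*} [Fintype ι] {m : ℕ} (x : ι → ℝ)
    (T : (Fin (m + 2) → ι) → ℝ) {c : ℝ}
    (h : ∀ t, |∑ a, ∑ b, x a * x b * T (Fin.cons a (Fin.cons b t))| ≤ c) :
    |∑ v, (∏ i, x (v i)) * T v| ≤ (∑ i, |x i|) ^ m * c := by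
  have hsplit : ∑ v, (∏ i, x (v i)) * T v
      = ∑ t : Fin m → ι,
          (∏ i, x (t i)) * ∑ a, ∑ b, x a * x b * T (Fin.cons a (Fin.cons b t)) := by
    simp only [Fintype.sum_fin_add_two_pi, Fin.prod_cons_cons, Finset.mul_sum]
    exact Finset.sum_congr rfl fun t _ => Finset.sum_congr rfl fun a _ =>
      Finset.sum_congr rfl fun b _ => by ring
  calc |∑ v, (∏ i, x (v i)) * T v| ≤ ∑ t : Fin m → ι, (∏ i, |x (t i)|) * c := by
        rw [hsplit]
        refine (Finset.abs_sum_le_sum_abs _ _).trans (Finset.sum_le_sum fun t _ => ?_)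
        rw [abs_mul, Finset.abs_prod]
        exact mul_le_mul_of_nonneg_left (h t) (by positivity)
    _ = (∑ i, |x i|) ^ m * c := by rw [← Finset.sum_mul, Fintype.sum_pow]

lemma setFront_cons_cons {m p : ℕ} (j k a b : Fin p) (t : Fin m → Fin p) :
    setFront j k (Fin.cons a (Fin.cons b t) : Fin (m + 2) → Fin p)
      = Fin.cons j (Fin.cons k t) := by
  funext i
  refine Fin.cases ?_ (fun i => Fin.cases ?_ (fun i => ?_) i) i <;> simp [setFront]

lemma abs_sum_slice_le_of_eigsIn {m p : ℕ} {T : (Fin (m + 2) → Fin p) → ℝ} {a b : ℝ}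
    (h : ∀ w, eigsIn (Matrix.of fun j k => T (setFront j k w)) a b) (x : E p)
    (t : Fin m → Fin p) :
    |∑ j, ∑ k, x j * x k * T (Fin.cons j (Fin.cons k t))| ≤ max |a| |b| * ‖x‖ ^ 2 := by
  rcases isEmpty_or_nonempty (Fin p) with hp | ⟨⟨c⟩⟩
  · simp only [Finset.univ_eq_empty, Finset.sum_empty, abs_zero]
    positivity
  · simpa [setFront_cons_cons] using (h (Fin.cons c (Fin.cons c t))).abs_sum_mul_mul_le x

lemma EuclideanSpace.sum_abs_le_sqrt_card_mul_norm {ι : Type*} [Fintype ι]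
    (x : EuclideanSpace ℝ ι) : ∑ i, |x i| ≤ √(Fintype.card ι) * ‖x‖ := by
  have hsq : (∑ i, |x i|) ^ 2 ≤ Fintype.card ι * ‖x‖ ^ 2 := by
    simpa [EuclideanSpace.real_norm_sq_eq] using
      sq_sum_le_card_mul_sum_sq (s := Finset.univ) (f := fun i => |x i|)
  rw [← Real.sqrt_sq (norm_nonneg x), ← Real.sqrt_mul (Nat.cast_nonneg _)]
  exact Real.le_sqrt_of_sq_le hsq

lemma abs_Rrem_le {p m : ℕ} {g : E p → ℝ} {θ θs : E p} {a b : ℝ}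
    (h : ∀ w, eigsIn (Matrix.of fun j k => pd (m + 2) g θs (setFront j k w)) a b) :
    |Rrem (m + 2) g θ θs| ≤ max |a| |b| * (√p * ‖θ‖) ^ m * ‖θ‖ ^ 2 := by
  have hfact : |1 / ((m + 2).factorial : ℝ)| ≤ 1 := by
    rw [abs_of_nonneg (by positivity)]
    exact div_le_one_of_le₀ (mod_cast (m + 2).factorial_pos) (by positivity)
  have hℓ₁ : ∑ i, |θ i| ≤ √p * ‖θ‖ := by
    simpa using EuclideanSpace.sum_abs_le_sqrt_card_mul_norm θ
  calc |Rrem (m + 2) g θ θs|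
      ≤ 1 * ((∑ i, |θ i|) ^ m * (max |a| |b| * ‖θ‖ ^ 2)) := by
        rw [Rrem, abs_mul]
        exact mul_le_mul hfact (abs_sum_prod_mul_le _ _ (abs_sum_slice_le_of_eigsIn h θ))
          (abs_nonneg _) zero_le_one
    _ ≤ max |a| |b| * (√p * ‖θ‖) ^ m * ‖θ‖ ^ 2 := by
        rw [one_mul, mul_left_comm, ← mul_assoc]
        gcongr

lemma mul_sqrt_pow_mul_sqrt_mul_div_pow {P L n : ℝ} (hP : 0 ≤ P) (hL : 0 ≤ L) (hn : 0 < n)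
    (m : ℕ) :
    n * √P ^ m * √(P * L / n) ^ (m + 2)
      = P ^ (m + 1) * L ^ (((m + 2 : ℕ) : ℝ) / 2) / n ^ ((m : ℝ) / 2) := by
  obtain ⟨a, ha, rfl⟩ : ∃ a, 0 ≤ a ∧ P = a ^ 2 :=
    ⟨√P, Real.sqrt_nonneg P, (Real.sq_sqrt hP).symm⟩
  obtain ⟨l, hl, rfl⟩ : ∃ l, 0 ≤ l ∧ L = l ^ 2 :=
    ⟨√L, Real.sqrt_nonneg L, (Real.sq_sqrt hL).symm⟩
  obtain ⟨s, hs, rfl⟩ : ∃ s, 0 < s ∧ n = s ^ 2 :=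
    ⟨√n, Real.sqrt_pos.mpr hn, (Real.sq_sqrt hn.le).symm⟩
  rw [Real.rpow_div_two_eq_sqrt _ hL, Real.rpow_div_two_eq_sqrt _ hn.le, Real.rpow_natCast,
    Real.rpow_natCast, ← mul_pow, ← div_pow, Real.sqrt_sq ha, Real.sqrt_sq hl, Real.sqrt_sq hs.le,
    Real.sqrt_sq (by positivity), div_pow, mul_pow, pow_add s]
  field_simp
  ring

def taylorRate (ζ p n : ℕ) : ℝ :=
  (p : ℝ) ^ (ζ - 1) * Real.log n ^ ((ζ : ℝ) / 2) / (n : ℝ) ^ (((ζ : ℝ) - 2) / 2)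

lemma taylorRate_nonneg (ζ p n : ℕ) : 0 ≤ taylorRate ζ p n := by
  have := Real.log_natCast_nonneg n
  unfold taylorRate
  positivity

lemma taylorRate_add_two (m p n : ℕ) :
    taylorRate (m + 2) p n
      = (p : ℝ) ^ (m + 1) * Real.log n ^ (((m + 2 : ℕ) : ℝ) / 2) / (n : ℝ) ^ ((m : ℝ) / 2) := by
  rw [taylorRate, show ((m + 2 : ℕ) : ℝ) - 2 = m by push_cast; ring,
    show m + 2 - 1 = m + 1 from rfl]

lemma abs_Rrem_le_taylorRate {p n m : ℕ} (hn : 0 < n) {g : E p → ℝ} {θ θs : E p} {a b : ℝ}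
    (h : ∀ w, eigsIn (Matrix.of fun j k => pd (m + 2) g θs (setFront j k w)) (a * n) (b * n))
    (hθ : ‖θ‖ ≤ √2 * gam p n) :
    |Rrem (m + 2) g θ θs| ≤ max |a| |b| * √2 ^ (m + 2) * taylorRate (m + 2) p n := by
  have hL : 0 ≤ Real.log n := Real.log_natCast_nonneg n
  have hn0 : (0 : ℝ) < n := by exact_mod_cast hn
  rw [gam] at hθ
  calc |Rrem (m + 2) g θ θs| ≤ max |a * n| |b * n| * (√p * ‖θ‖) ^ m * ‖θ‖ ^ 2 :=
        abs_Rrem_le h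
    _ ≤ max |a * n| |b * n| * (√p * (√2 * √(p * Real.log n / n))) ^ m
          * (√2 * √(p * Real.log n / n)) ^ 2 := by
      gcongr
    _ = max |a| |b| * √2 ^ (m + 2) * (n * √p ^ m * √(p * Real.log n / n) ^ (m + 2)) := by
      rw [abs_mul, abs_mul, Nat.abs_cast, ← max_mul_of_nonneg _ _ hn0.le]
      ring
    _ = max |a| |b| * √2 ^ (m + 2) * taylorRate (m + 2) p n := by
      rw [mul_sqrt_pow_mul_sqrt_mul_div_pow (Nat.cast_nonneg _) hL hn0, taylorRate_add_two]

lemma mul_add_one_lt_div_two_of_lt {α : ℝ} {m : ℕ}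
    (hα : α < 1 / 2 - 1 / (2 * ((m + 2 : ℕ) : ℝ) - 2)) : α * (m + 1) < m / 2 := by
  have h2 : 2 * ((m + 2 : ℕ) : ℝ) - 2 = 2 * (m + 1) := by push_cast; ring
  rw [h2] at hα
  have := mul_lt_mul_of_pos_right hα (by positivity : (0 : ℝ) < m + 1)
  field_simp at this
  linarith

lemma pow_mul_div_rpow_le {P A α n L : ℝ} (hP0 : 0 ≤ P) (hP : P ≤ A * n ^ α) (hn : 0 < n)
    (hL : 0 ≤ L) (m : ℕ) (β : ℝ) :
    P ^ (m + 1) * L / n ^ β ≤ A ^ (m + 1) * L / n ^ (β - α * (m + 1)) := by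
  have hpow : P ^ (m + 1) ≤ A ^ (m + 1) * n ^ (α * (m + 1)) := by
    calc P ^ (m + 1) ≤ (A * n ^ α) ^ (m + 1) := pow_le_pow_left₀ hP0 hP _
      _ = A ^ (m + 1) * n ^ (α * (m + 1)) := by
        rw [mul_pow, ← Real.rpow_natCast (n ^ α), ← Real.rpow_mul hn.le]
        push_cast
        rfl
  rw [Real.rpow_sub hn, div_div_eq_mul_div, mul_right_comm]
  gcongr

lemma tendsto_log_rpow_div_rpow_natCast (r : ℝ) {s : ℝ} (hs : 0 < s) :
    Tendsto (fun n : ℕ => Real.log n ^ r / (n : ℝ) ^ s) atTop (nhds 0) :=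
  (isLittleO_log_rpow_rpow_atTop r hs).tendsto_div_nhds_zero.comp tendsto_natCast_atTop_atTop

lemma eventually_mul_taylorRate_lt_one {A α c : ℝ} {m : ℕ} (hc : 0 ≤ c)
    (hα : α * (m + 1) < m / 2) :
    ∀ᶠ n : ℕ in atTop, ∀ P : ℕ, (P : ℝ) ≤ A * (n : ℝ) ^ α → c * taylorRate (m + 2) P n < 1 := by
  have hlim := (tendsto_log_rpow_div_rpow_natCast (((m + 2 : ℕ) : ℝ) / 2)
    (sub_pos.mpr hα)).const_mul (c * A ^ (m + 1))
  filter_upwards [hlim.eventually_lt_const (by simp : c * A ^ (m + 1) * 0 < 1),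
    eventually_gt_atTop 0] with n hsmall hn P hP
  have hn0 : (0 : ℝ) < n := by exact_mod_cast hn
  calc c * taylorRate (m + 2) P n
      ≤ c * (A ^ (m + 1) * Real.log n ^ (((m + 2 : ℕ) : ℝ) / 2)
          / (n : ℝ) ^ ((m : ℝ) / 2 - α * (m + 1))) := by
        rw [taylorRate_add_two]
        exact mul_le_mul_of_nonneg_left (pow_mul_div_rpow_le (Nat.cast_nonneg _) hP hn0
          (Real.rpow_nonneg (Real.log_natCast_nonneg n) _) m _) hc
    _ < 1 := by rwa [mul_div_assoc, ← mul_assoc]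

lemma norm_sub_le_of_mem_segment_add {F : Type*} [NormedAddCommGroup F] [NormedSpace ℝ F]
    {x y z : F} (hz : z ∈ segment ℝ x (x + y)) : ‖z - x‖ ≤ ‖y‖ := by
  have hx : x ∈ Metric.closedBall x ‖y‖ := Metric.mem_closedBall_self (norm_nonneg y)
  have hxy : x + y ∈ Metric.closedBall x ‖y‖ := by simp [dist_eq_norm]
  simpa [dist_eq_norm] using (convex_closedBall x ‖y‖).segment_subset hx hxy hz

theorem taylor_remainder_bound_general
    (ζ : ℕ) (hζ : 4 < ζ) (Bz Cz A α : ℝ)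
    (hα : α < 1 / 2 - 1 / (2 * (ζ : ℝ) - 2)) :
    ∃ C > 0, ∃ N : ℕ,
      ∀ (p : ℕ → ℕ) (g : (n : ℕ) → E (p n) → ℝ) (θhat : (n : ℕ) → E (p n)),
        (∀ n, (p n : ℝ) ≤ A * (n : ℝ) ^ α) →
        (∀ n, ContDiff ℝ ζ (g n)) →
        -- eigenvalue bounds on all ζ-th order derivative sub-matrices near θ̂_n
        (∀ n, ∀ w : Fin ζ → Fin (p n), ∀ θs : E (p n),
          ‖θs - θhat n‖ ≤ Real.sqrt 2 * gam (p n) n →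
          eigsIn (Matrix.of fun j k => pd ζ (g n) θs (setFront j k w))
            (Bz * n) (Cz * n)) →
        ∀ n ≥ N, ∀ θ : E (p n), ‖θ‖ ≤ Real.sqrt 2 * gam (p n) n →
          ∀ θtil ∈ segment ℝ (θhat n) (θhat n + θ),
            |Real.exp (Rrem ζ (g n) θ θtil) - 1|
                ≤ C * (p n : ℝ) ^ (ζ - 1) * Real.log n ^ ((ζ : ℝ) / 2) /
                    (n : ℝ) ^ (((ζ : ℝ) - 2) / 2) ∧
            |Rrem ζ (g n) θ θtil|
                ≤ C * (p n : ℝ) ^ (ζ - 1) * Real.log n ^ ((ζ : ℝ) / 2) /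
                    (n : ℝ) ^ (((ζ : ℝ) - 2) / 2) := by
  obtain ⟨m, rfl⟩ : ∃ m, ζ = m + 2 := ⟨ζ - 2, by omega⟩
  set c₀ := max |Bz| |Cz| * √2 ^ (m + 2)
  have hc₀ : 0 ≤ c₀ := by positivity
  obtain ⟨N, hN⟩ := ((eventually_mul_taylorRate_lt_one (A := A) hc₀
    (mul_add_one_lt_div_two_of_lt hα)).and (eventually_gt_atTop 0)).exists_forall_of_atTop
  refine ⟨2 * c₀ + 1, by positivity, N, fun p g θhat hp _ heig n hn θ hθ θtil hθtil => ?_⟩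
  obtain ⟨hsmall, hn0⟩ := hN n hn
  have hR : |Rrem (m + 2) (g n) θ θtil| ≤ c₀ * taylorRate (m + 2) (p n) n :=
    abs_Rrem_le_taylorRate hn0
      (heig n · θtil ((norm_sub_le_of_mem_segment_add hθtil).trans hθ)) hθ
  have hR1 : |Rrem (m + 2) (g n) θ θtil| ≤ 1 := hR.trans (hsmall (p n) (hp n)).le
  have hrate := taylorRate_nonneg (m + 2) (p n) n
  rw [mul_assoc, mul_div_assoc, ← taylorRate]
  exact ⟨(Real.abs_exp_sub_one_le hR1).trans (by nlinarith), hR.trans (by nlinarith)⟩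

/-- size of the `ζ`-th order Taylor remainder. -/
theorem taylor_remainder_bound
    (ζ : ℕ) (hζ : 4 < ζ) (Bz Cz A α : ℝ) (hBC : Bz ≤ Cz) (hA : 0 < A) (hα0 : 0 < α)
    (hα : α < 1 / 2 - 1 / (2 * (ζ : ℝ) - 2)) :
    ∃ C > 0, ∃ N : ℕ,
      ∀ (p : ℕ → ℕ) (g : (n : ℕ) → E (p n) → ℝ) (θhat : (n : ℕ) → E (p n)),
        (∀ n, (p n : ℝ) ≤ A * (n : ℝ) ^ α) →
        (∀ n, ContDiff ℝ ζ (g n)) →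
        -- eigenvalue bounds on all ζ-th order derivative sub-matrices near θ̂_n
        (∀ n, ∀ w : Fin ζ → Fin (p n), ∀ θs : E (p n),
          ‖θs - θhat n‖ ≤ Real.sqrt 2 * gam (p n) n →
          eigsIn (Matrix.of fun j k => pd ζ (g n) θs (setFront j k w))
            (Bz * n) (Cz * n)) →
        ∀ n ≥ N, ∀ θ : E (p n), ‖θ‖ ≤ Real.sqrt 2 * gam (p n) n →
          ∀ θtil ∈ segment ℝ (θhat n) (θhat n + θ),
            |Real.exp (Rrem ζ (g n) θ θtil) - 1|
                ≤ C * (p n : ℝ) ^ (ζ - 1) * Real.log n ^ ((ζ : ℝ) / 2) /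
                    (n : ℝ) ^ (((ζ : ℝ) - 2) / 2) ∧
            |Rrem ζ (g n) θ θtil|
                ≤ C * (p n : ℝ) ^ (ζ - 1) * Real.log n ^ ((ζ : ℝ) / 2) /
                    (n : ℝ) ^ (((ζ : ℝ) - 2) / 2) :=
  taylor_remainder_bound_general ζ hζ Bz Cz A α hα
end
end
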